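/- Assume the sparsity ansatz. For B > 0 let L̂_B be a minimizer of CE(L) over {L ∈ ℝ^{V×m} : ‖L‖_* ≤ B}, let L^mm be a minimizer of the NTP-SVM program, and for B > ‖L^in‖_* set R = R(B) := (‖L̂_B‖_* − ‖L^in‖_*)/‖L^mm‖_*. Then: (a) the matrix L_R := L^in + R·L^mm satisfies ‖L_R‖_* ≤ B and CE(L_R) ≤ H + V·e^{2‖L^in‖₂}·e^{−R}, where ‖·‖₂ is the spectral norm; (b) lim_{B→∞} R(B) = +∞ and lim_{B→∞} R(B)/‖L̂_B‖_* = 1/‖L^mm‖_*; (c) lim_{B→∞} CE(L̂_B) = H. -/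

import Mathlib

open Filter Topology Matrix

noncomputable section

/-- Nuclear norm: sum of the singular values of `A`. -/
def nuclearNorm {a b : ℕ} (A : Matrix (Fin a) (Fin b) ℝ) : ℝ :=
  ∑ i, Real.sqrt ((show (Aᵀ * A).IsHermitian by simpa using Matrix.isHermitian_conjTranspose_mul_self A).eigenvalues i)

/-- Spectral norm: largest singular value of `A`. -/
def specNorm {a b : ℕ} (A : Matrix (Fin a) (Fin b) ℝ) : ℝ :=
  ⨆ i, Real.sqrt ((show (Aᵀ * A).IsHermitian by simpa using Matrix.isHermitian_conjTranspose_mul_self A).eigenvalues i)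

/-- The NTP cross-entropy loss. -/
def CEloss {V m : ℕ} (piv : Fin m → ℝ) (p : Fin m → Fin V → ℝ)
    (L : Matrix (Fin V) (Fin m) ℝ) : ℝ :=
  - ∑ j, piv j * ∑ z ∈ Finset.univ.filter (fun z => 0 < p j z),
      p j z * Real.log (Real.exp (L z j) / ∑ v, Real.exp (L v j))

/-- The empirical entropy. -/
def entropyH {V m : ℕ} (piv : Fin m → ℝ) (p : Fin m → Fin V → ℝ) : ℝ :=
  - ∑ j, piv j * ∑ z ∈ Finset.univ.filter (fun z => 0 < p j z),
      p j z * Real.log (p j z)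

/-- Feasibility for the NTP-SVM program (support sets `S_j = {z | 0 < p j z}`). -/
def svmFeasibleP {V m : ℕ} (p : Fin m → Fin V → ℝ) (L : Matrix (Fin V) (Fin m) ℝ) : Prop :=
  (∀ j z z', 0 < p j z → 0 < p j z' → L z j = L z' j) ∧
  (∀ j z v, 0 < p j z → ¬ 0 < p j v → 1 ≤ L z j - L v j)

/-- The subspace `F`: span of the matrices `(e_z − e_{z'}) ẽ_jᵀ` over `j` and `z, z' ∈ S_j`. -/
def Fsub {V m : ℕ} (p : Fin m → Fin V → ℝ) : Submodule ℝ (Matrix (Fin V) (Fin m) ℝ) :=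
  Submodule.span ℝ {M | ∃ j z z', 0 < p j z ∧ 0 < p j z' ∧
    M = Matrix.single z j 1 - Matrix.single z' j 1}

/-!
`CE(L) - H` is the `π̂`-weighted sum of the divergences `KL(p̂_j ‖ softmax L_j)`, which under
the sparsity ansatz is positive for every `L`: the loss has no minimiser. Since the loss and the
nuclear norm are convex, a minimiser over a nuclear-norm ball therefore lies on its boundary,
`‖L̂_B‖_* = B`, which makes `R(B)` explicit. Along the ray `L^in + r L^mm` the divergences decay
like `V e^{2‖L^in‖₂} e^{-r}`: `L^in` reproduces the log-odds of `p̂_j` on its support, and the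
margin of `L^mm` pushes every off-support logit `r` below the support ones.

The nuclear norm enters through a singular value decomposition `A = ∑ σ_k u_k v_kᵀ`: for all
Bessel families `U`, `W` one has `∑ᵢ ⟪Uᵢ, A Wᵢ⟫ ≤ ‖A‖_*`, with equality at `U = u`, `W = v`,
whence the triangle inequality.
-/

theorem ConvexOn.eq_of_isMinOn_of_lt {E : Type*} [AddCommGroup E] [Module ℝ E] {f N : E → ℝ}
    (hf : ConvexOn ℝ Set.univ f) (hN : ConvexOn ℝ Set.univ N) {B : ℝ} {x y : E}
    (hxB : N x ≤ B) (hx : IsMinOn f {z | N z ≤ B} x) (hy : f y < f x) : N x = B := by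
  by_contra hne
  have hlt : N x < B := hxB.lt_of_ne hne
  obtain ⟨c, hc, hcN⟩ := exists_pos_mul_lt (sub_pos.mpr hlt) (N y - N x)
  set θ := min c 1
  have hθ : 0 < θ := lt_min hc one_pos
  have hθN : θ * (N y - N x) ≤ B - N x := by
    rcases le_total (N y - N x) 0 with h | h
    · nlinarith
    · nlinarith [min_le_left c 1]
  have hNz : N ((1 - θ) • x + θ • y) ≤ B := by
    refine (hN.2 trivial trivial (sub_nonneg.mpr (min_le_right c 1)) hθ.le (by ring)).trans ?_
    simp only [smul_eq_mul]
    linarith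
  have hfz : f ((1 - θ) • x + θ • y) < f x := by
    refine (hf.2 trivial trivial (sub_nonneg.mpr (min_le_right c 1)) hθ.le (by ring)).trans_lt ?_
    simp only [smul_eq_mul]
    nlinarith
  exact (hx hNz).not_gt hfz

section BesselFamily

variable {ι n : Type*} [Fintype ι] [Fintype n]

def IsBesselFamily (U : ι → n → ℝ) : Prop :=
  ∀ x : n → ℝ, ∑ i, (U i ⬝ᵥ x) ^ 2 ≤ x ⬝ᵥ x

theorem isBesselFamily_of_orthogonal {U : ι → n → ℝ}
    (horth : Pairwise fun i j => U i ⬝ᵥ U j = 0) (hle : ∀ i, U i ⬝ᵥ U i ≤ 1) :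
    IsBesselFamily U := by
  classical
  intro x
  set y := ∑ i, (U i ⬝ᵥ x) • U i
  have hxy : x ⬝ᵥ y = ∑ i, (U i ⬝ᵥ x) ^ 2 := by
    rw [dotProduct_comm]
    simp only [y, sum_dotProduct, smul_dotProduct, smul_eq_mul, sq]
  have hyy : y ⬝ᵥ y ≤ x ⬝ᵥ y := by
    have hUy : ∀ i, U i ⬝ᵥ y = (U i ⬝ᵥ x) * (U i ⬝ᵥ U i) := fun i => by
      simp only [y, dotProduct_sum, dotProduct_smul, smul_eq_mul]
      exact Finset.sum_eq_single i (fun j _ hji => by rw [horth (Ne.symm hji), mul_zero])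
        (by simp)
    rw [hxy]
    simp only [y, sum_dotProduct, smul_dotProduct, smul_eq_mul, hUy]
    exact Finset.sum_le_sum fun i _ => by
      nlinarith [hle i, sq_nonneg (U i ⬝ᵥ x)]
  have h0 : 0 ≤ (x - y) ⬝ᵥ (x - y) := Finset.sum_nonneg fun i _ => mul_self_nonneg _
  rw [sub_dotProduct, dotProduct_sub, dotProduct_sub, dotProduct_comm y x] at h0
  linarith

theorem IsBesselFamily.sum_abs_mul_le_one {U : ι → n → ℝ} (hU : IsBesselFamily U)
    {x : n → ℝ} (hx : x ⬝ᵥ x ≤ 1) {a : ι → ℝ} (ha : ∑ i, a i ^ 2 ≤ 1) :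
    ∑ i, |a i * (U i ⬝ᵥ x)| ≤ 1 := by
  have hamgm : ∀ i, |a i * (U i ⬝ᵥ x)| ≤ (a i ^ 2 + (U i ⬝ᵥ x) ^ 2) / 2 := fun i => by
    rw [abs_mul]
    nlinarith [sq_nonneg (|a i| - |U i ⬝ᵥ x|), sq_abs (a i), sq_abs (U i ⬝ᵥ x)]
  calc ∑ i, |a i * (U i ⬝ᵥ x)| ≤ ∑ i, (a i ^ 2 + (U i ⬝ᵥ x) ^ 2) / 2 :=
        Finset.sum_le_sum fun i _ => hamgm i
    _ = (∑ i, a i ^ 2 + ∑ i, (U i ⬝ᵥ x) ^ 2) / 2 := by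
        rw [← Finset.sum_div, Finset.sum_add_distrib]
    _ ≤ 1 := by linarith [hU x]

end BesselFamily

namespace Matrix

variable {a b : ℕ} (A : Matrix (Fin a) (Fin b) ℝ)

theorem isHermitian_transpose_mul_self : (Aᵀ * A).IsHermitian := by
  simpa using isHermitian_conjTranspose_mul_self A

def singularValue (k : Fin b) : ℝ :=
  √(A.isHermitian_transpose_mul_self.eigenvalues k)

def rightSingularVector (k : Fin b) : Fin b → ℝ :=
  A.isHermitian_transpose_mul_self.eigenvectorBasis k

def leftSingularVector (k : Fin b) : Fin a → ℝ :=
  (A.singularValue k)⁻¹ • A *ᵥ A.rightSingularVector k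

theorem nuclearNorm_eq_sum_singularValue : nuclearNorm A = ∑ k, A.singularValue k := rfl

theorem specNorm_eq_iSup_singularValue : specNorm A = ⨆ k, A.singularValue k := rfl

theorem singularValue_nonneg (k : Fin b) : 0 ≤ A.singularValue k := Real.sqrt_nonneg _

theorem singularValue_mul_self (k : Fin b) :
    A.singularValue k * A.singularValue k = A.isHermitian_transpose_mul_self.eigenvalues k :=
  Real.mul_self_sqrt (by simpa using eigenvalues_conjTranspose_mul_self_nonneg A k)

theorem rightSingularVector_dotProduct (i j : Fin b) :
    A.rightSingularVector i ⬝ᵥ A.rightSingularVector j = if i = j then 1 else 0 := by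
  have h := orthonormal_iff_ite.mp A.isHermitian_transpose_mul_self.eigenvectorBasis.orthonormal i j
  simpa [PiLp.inner_apply, dotProduct, rightSingularVector, mul_comm] using h

theorem eq_sum_rightSingularVector (x : Fin b → ℝ) :
    x = ∑ k, (A.rightSingularVector k ⬝ᵥ x) • A.rightSingularVector k := by
  have h := congrArg WithLp.ofLp
    (A.isHermitian_transpose_mul_self.eigenvectorBasis.sum_repr' (WithLp.toLp 2 x))
  simpa [PiLp.inner_apply, dotProduct, rightSingularVector, mul_comm, WithLp.ofLp_sum] using h.symm

theorem mulVec_rightSingularVector_dotProduct (i j : Fin b) :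
    (A *ᵥ A.rightSingularVector i) ⬝ᵥ (A *ᵥ A.rightSingularVector j) =
      if i = j then A.singularValue i * A.singularValue i else 0 := by
  have heig : (Aᵀ * A) *ᵥ A.rightSingularVector j =
      A.isHermitian_transpose_mul_self.eigenvalues j • A.rightSingularVector j :=
    A.isHermitian_transpose_mul_self.mulVec_eigenvectorBasis j
  rw [dotProduct_mulVec, vecMul_mulVec, ← dotProduct_mulVec, heig, dotProduct_smul,
    rightSingularVector_dotProduct, ← singularValue_mul_self]
  split_ifs with h <;> simp [h]

theorem mulVec_rightSingularVector (k : Fin b) :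
    A *ᵥ A.rightSingularVector k = A.singularValue k • A.leftSingularVector k := by
  by_cases hk : A.singularValue k = 0
  · have h := A.mulVec_rightSingularVector_dotProduct k k
    rw [if_pos rfl, hk, mul_zero] at h
    rw [dotProduct_self_eq_zero.mp h, hk, zero_smul]
  · rw [leftSingularVector, smul_smul, mul_inv_cancel₀ hk, one_smul]

theorem leftSingularVector_dotProduct (i j : Fin b) :
    A.leftSingularVector i ⬝ᵥ A.leftSingularVector j =
      if i = j ∧ A.singularValue i ≠ 0 then 1 else 0 := by
  rw [leftSingularVector, leftSingularVector, smul_dotProduct, dotProduct_smul,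
    mulVec_rightSingularVector_dotProduct]
  by_cases h : i = j
  · subst h
    by_cases hi : A.singularValue i = 0 <;> simp [hi]
  · simp [h]

theorem isBesselFamily_leftSingularVector : IsBesselFamily A.leftSingularVector :=
  isBesselFamily_of_orthogonal
    (fun i j hij => by simp [leftSingularVector_dotProduct, hij])
    (fun i => by rw [leftSingularVector_dotProduct]; split_ifs <;> norm_num)

theorem isBesselFamily_rightSingularVector : IsBesselFamily A.rightSingularVector :=
  isBesselFamily_of_orthogonal
    (fun i j hij => by simp [rightSingularVector_dotProduct, hij])
    (fun i => by simp [rightSingularVector_dotProduct])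

theorem dotProduct_mulVec_eq_sum (x : Fin a → ℝ) (y : Fin b → ℝ) :
    x ⬝ᵥ A *ᵥ y = ∑ k, A.singularValue k *
      ((A.rightSingularVector k ⬝ᵥ y) * (A.leftSingularVector k ⬝ᵥ x)) := by
  conv_lhs => rw [A.eq_sum_rightSingularVector y]
  rw [dotProduct_comm]
  simp only [mulVec_sum, mulVec_smul, mulVec_rightSingularVector, sum_dotProduct,
    smul_dotProduct, smul_eq_mul]
  exact Finset.sum_congr rfl fun k _ => by ring

theorem nuclearNorm_eq_sum_dotProduct :
    nuclearNorm A = ∑ k, A.leftSingularVector k ⬝ᵥ A *ᵥ A.rightSingularVector k := by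
  rw [nuclearNorm_eq_sum_singularValue]
  refine Finset.sum_congr rfl fun k _ => ?_
  rw [mulVec_rightSingularVector, dotProduct_smul, leftSingularVector_dotProduct, smul_eq_mul]
  by_cases hk : A.singularValue k = 0 <;> simp [hk]

end Matrix

section NuclearNorm

variable {a b : ℕ}

open Matrix

theorem sum_dotProduct_mulVec_le_nuclearNorm {ι : Type*} [Fintype ι]
    (C : Matrix (Fin a) (Fin b) ℝ) {U : ι → Fin a → ℝ} {W : ι → Fin b → ℝ}
    (hU : IsBesselFamily U) (hW : IsBesselFamily W) :
    ∑ i, U i ⬝ᵥ C *ᵥ W i ≤ nuclearNorm C := by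
  simp only [dotProduct_mulVec_eq_sum, nuclearNorm_eq_sum_singularValue]
  rw [Finset.sum_comm]
  refine Finset.sum_le_sum fun k _ => ?_
  have hvW : ∑ i, (C.rightSingularVector k ⬝ᵥ W i) ^ 2 ≤ 1 := by
    simpa [dotProduct_comm, rightSingularVector_dotProduct] using hW (C.rightSingularVector k)
  have hu : C.leftSingularVector k ⬝ᵥ C.leftSingularVector k ≤ 1 := by
    rw [leftSingularVector_dotProduct]; split_ifs <;> norm_num
  calc ∑ i, C.singularValue k *
        ((C.rightSingularVector k ⬝ᵥ W i) * (C.leftSingularVector k ⬝ᵥ U i))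
      ≤ C.singularValue k *
        ∑ i, |(C.rightSingularVector k ⬝ᵥ W i) * (U i ⬝ᵥ C.leftSingularVector k)| := by
        rw [Finset.mul_sum]
        exact Finset.sum_le_sum fun i _ => mul_le_mul_of_nonneg_left
          (by rw [dotProduct_comm (C.leftSingularVector k)]; exact le_abs_self _)
          (singularValue_nonneg C k)
    _ ≤ C.singularValue k := mul_le_of_le_one_right (singularValue_nonneg C k)
        (hU.sum_abs_mul_le_one hu hvW)

theorem nuclearNorm_nonneg (A : Matrix (Fin a) (Fin b) ℝ) : 0 ≤ nuclearNorm A :=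
  Finset.sum_nonneg fun k _ => singularValue_nonneg A k

theorem nuclearNorm_add_le (A B : Matrix (Fin a) (Fin b) ℝ) :
    nuclearNorm (A + B) ≤ nuclearNorm A + nuclearNorm B := by
  have hU := isBesselFamily_leftSingularVector (A + B)
  have hW := isBesselFamily_rightSingularVector (A + B)
  rw [nuclearNorm_eq_sum_dotProduct (A + B)]
  simp only [add_mulVec, dotProduct_add, Finset.sum_add_distrib]
  exact add_le_add (sum_dotProduct_mulVec_le_nuclearNorm A hU hW)
    (sum_dotProduct_mulVec_le_nuclearNorm B hU hW)

theorem nuclearNorm_smul_le {t : ℝ} (ht : 0 ≤ t) (A : Matrix (Fin a) (Fin b) ℝ) :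
    nuclearNorm (t • A) ≤ t * nuclearNorm A := by
  rw [nuclearNorm_eq_sum_dotProduct (t • A)]
  simp only [smul_mulVec, dotProduct_smul, smul_eq_mul, ← Finset.mul_sum]
  exact mul_le_mul_of_nonneg_left (sum_dotProduct_mulVec_le_nuclearNorm A
    (isBesselFamily_leftSingularVector _) (isBesselFamily_rightSingularVector _)) ht

theorem nuclearNorm_add_smul_le (A B : Matrix (Fin a) (Fin b) ℝ) {t : ℝ} (ht : 0 ≤ t) :
    nuclearNorm (A + t • B) ≤ nuclearNorm A + t * nuclearNorm B :=
  (nuclearNorm_add_le _ _).trans (add_le_add le_rfl (nuclearNorm_smul_le ht B))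

theorem convexOn_nuclearNorm :
    ConvexOn ℝ Set.univ (nuclearNorm : Matrix (Fin a) (Fin b) ℝ → ℝ) :=
  ⟨convex_univ, fun A _ B _ _ _ hs ht _ =>
    (nuclearNorm_add_le _ _).trans
      (add_le_add (nuclearNorm_smul_le hs A) (nuclearNorm_smul_le ht B))⟩

theorem abs_apply_le_specNorm (A : Matrix (Fin a) (Fin b) ℝ) (z : Fin a) (j : Fin b) :
    |A z j| ≤ specNorm A := by
  have hσ : ∀ k, A.singularValue k ≤ specNorm A := fun k => by
    rw [specNorm_eq_iSup_singularValue]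
    exact le_ciSup (Set.finite_range _).bddAbove k
  have hentry : A z j = Pi.single z 1 ⬝ᵥ A *ᵥ Pi.single j 1 := by
    simp [mulVec_single, single_dotProduct]
  have hvj : ∑ k, (A.rightSingularVector k ⬝ᵥ Pi.single j 1) ^ 2 ≤ 1 := by
    simpa [single_dotProduct] using isBesselFamily_rightSingularVector A (Pi.single j 1)
  rw [hentry, dotProduct_mulVec_eq_sum]
  calc |∑ k, A.singularValue k * ((A.rightSingularVector k ⬝ᵥ Pi.single j 1) *
          (A.leftSingularVector k ⬝ᵥ Pi.single z 1))|
      ≤ ∑ k, specNorm A * |(A.rightSingularVector k ⬝ᵥ Pi.single j 1) *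
          (A.leftSingularVector k ⬝ᵥ Pi.single z 1)| := by
        refine (Finset.abs_sum_le_sum_abs _ _).trans (Finset.sum_le_sum fun k _ => ?_)
        rw [abs_mul, abs_of_nonneg (singularValue_nonneg A k)]
        exact mul_le_mul_of_nonneg_right (hσ k) (abs_nonneg _)
    _ ≤ specNorm A := by
        rw [← Finset.mul_sum]
        exact mul_le_of_le_one_right ((singularValue_nonneg A j).trans (hσ j))
          ((isBesselFamily_leftSingularVector A).sum_abs_mul_le_one (by simp) hvj)

theorem specNorm_le_nuclearNorm (A : Matrix (Fin a) (Fin b) ℝ) [Nonempty (Fin b)] :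
    specNorm A ≤ nuclearNorm A := by
  rw [specNorm_eq_iSup_singularValue, nuclearNorm_eq_sum_singularValue]
  exact ciSup_le fun k =>
    Finset.single_le_sum (fun k _ => singularValue_nonneg A k) (Finset.mem_univ k)

theorem abs_apply_le_nuclearNorm (A : Matrix (Fin a) (Fin b) ℝ) (z : Fin a) (j : Fin b) :
    |A z j| ≤ nuclearNorm A :=
  have : Nonempty (Fin b) := ⟨j⟩
  (abs_apply_le_specNorm A z j).trans (specNorm_le_nuclearNorm A)

end NuclearNorm

section Softmax

open Finset Real

variable {ι : Type*}

theorem sum_mul_sub_log_le_log_sum_exp {s : Finset ι} {w : ι → ℝ} (hw : ∀ i ∈ s, 0 < w i)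
    (hsum : ∑ i ∈ s, w i = 1) (x : ι → ℝ) :
    ∑ i ∈ s, w i * (x i - log (w i)) ≤ log (∑ i ∈ s, exp (x i)) := by
  have h := strictConcaveOn_log_Ioi.concaveOn.le_map_sum (p := fun i => exp (x i) / w i)
    (fun i hi => (hw i hi).le) hsum fun i hi => div_pos (exp_pos _) (hw i hi)
  calc ∑ i ∈ s, w i * (x i - log (w i)) = ∑ i ∈ s, w i • log (exp (x i) / w i) :=
        sum_congr rfl fun i hi => by
          rw [smul_eq_mul, log_div (exp_pos _).ne' (hw i hi).ne', log_exp]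
    _ ≤ log (∑ i ∈ s, w i • (exp (x i) / w i)) := h
    _ = log (∑ i ∈ s, exp (x i)) :=
        congrArg log (sum_congr rfl fun i hi => mul_div_cancel₀ _ (hw i hi).ne')

variable [Fintype ι]

/-- `KL(q ‖ softmax x)`. -/
def klSoftmax (q x : ι → ℝ) : ℝ :=
  log (∑ v, exp (x v)) - ∑ z ∈ univ.filter (fun z => 0 < q z), q z * (x z - log (q z))

theorem sum_filter_pos_eq_one {q : ι → ℝ} (hq : ∀ z, 0 ≤ q z) (hsum : ∑ z, q z = 1) :
    ∑ z ∈ univ.filter (fun z => 0 < q z), q z = 1 := by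
  rw [sum_filter_of_ne fun z _ hz => (hq z).lt_of_ne' hz, hsum]

theorem convexOn_logSumExp :
    ConvexOn ℝ Set.univ fun x : ι → ℝ => log (∑ v, exp (x v)) := by
  rcases isEmpty_or_nonempty ι with hι | hι
  · simpa using convexOn_const (0 : ℝ) (convex_univ (𝕜 := ℝ) (E := ι → ℝ))
  refine ⟨convex_univ, fun x _ y _ a b ha hb hab => ?_⟩
  set c := a • x + b • y
  set T := ∑ v, exp (c v)
  have hT : 0 < T := sum_pos (fun v _ => exp_pos _) univ_nonempty
  -- Gibbs' inequality is an equality at the softmax weights of `c`.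
  have hlogT : ∀ v, c v - log (exp (c v) / T) = log T := fun v => by
    rw [log_div (exp_pos _).ne' hT.ne', log_exp]; ring
  have hw : ∀ v ∈ univ, 0 < exp (c v) / T := fun v _ => div_pos (exp_pos _) hT
  have hsum : ∑ v, exp (c v) / T = 1 := by rw [← sum_div, div_self hT.ne']
  have hx := sum_mul_sub_log_le_log_sum_exp hw hsum x
  have hy := sum_mul_sub_log_le_log_sum_exp hw hsum y
  calc log T = ∑ v, exp (c v) / T * (c v - log (exp (c v) / T)) := by
        simp only [hlogT, ← sum_mul, hsum, one_mul]
    _ = a * ∑ v, exp (c v) / T * (x v - log (exp (c v) / T)) +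
        b * ∑ v, exp (c v) / T * (y v - log (exp (c v) / T)) := by
        simp only [mul_sum, ← sum_add_distrib]
        refine sum_congr rfl fun v _ => ?_
        simp only [c, Pi.add_apply, Pi.smul_apply, smul_eq_mul]
        linear_combination (exp (a * x v + b * y v) / T * log (exp (a * x v + b * y v) / T)) * hab
    _ ≤ a • log (∑ v, exp (x v)) + b • log (∑ v, exp (y v)) := by
        simp only [smul_eq_mul]
        gcongr

theorem log_sum_exp_sub_log_sum_filter_exp_le_klSoftmax {q : ι → ℝ} (hq : ∀ z, 0 ≤ q z)
    (hsum : ∑ z, q z = 1) (x : ι → ℝ) :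
    log (∑ v, exp (x v)) - log (∑ z ∈ univ.filter (fun z => 0 < q z), exp (x z)) ≤
      klSoftmax q x := by
  have := sum_mul_sub_log_le_log_sum_exp (fun z hz => (mem_filter.mp hz).2)
    (sum_filter_pos_eq_one hq hsum) x
  rw [klSoftmax]
  linarith

theorem sum_filter_pos_exp_pos {q : ι → ℝ} (hq : ∀ z, 0 ≤ q z) (hsum : ∑ z, q z = 1)
    (x : ι → ℝ) : 0 < ∑ z ∈ univ.filter (fun z => 0 < q z), exp (x z) :=
  sum_pos (fun z _ => exp_pos _)
    (nonempty_of_sum_ne_zero (by rw [sum_filter_pos_eq_one hq hsum]; norm_num))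

theorem klSoftmax_nonneg {q : ι → ℝ} (hq : ∀ z, 0 ≤ q z) (hsum : ∑ z, q z = 1)
    (x : ι → ℝ) : 0 ≤ klSoftmax q x := by
  refine (sub_nonneg.mpr ?_).trans (log_sum_exp_sub_log_sum_filter_exp_le_klSoftmax hq hsum x)
  exact log_le_log (sum_filter_pos_exp_pos hq hsum x)
    (sum_le_sum_of_subset_of_nonneg (filter_subset _ _) fun v _ _ => (exp_pos _).le)

theorem klSoftmax_pos {q : ι → ℝ} (hq : ∀ z, 0 ≤ q z) (hsum : ∑ z, q z = 1) {v : ι}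
    (hv : ¬ 0 < q v) (x : ι → ℝ) : 0 < klSoftmax q x := by
  refine (sub_pos.mpr ?_).trans_le (log_sum_exp_sub_log_sum_filter_exp_le_klSoftmax hq hsum x)
  exact log_lt_log (sum_filter_pos_exp_pos hq hsum x)
    (sum_lt_sum_of_subset (filter_subset _ _) (mem_univ v) (by simp [hv]) (exp_pos _)
      fun w _ _ => (exp_pos _).le)

theorem klSoftmax_le {q x : ι → ℝ} (hq : ∀ z, 0 ≤ q z) (hsum : ∑ z, q z = 1) {κ t : ℝ}
    (hsupp : ∀ z, 0 < q z → x z = κ + log (q z))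
    (hoff : ∀ v, ¬ 0 < q v → x v ≤ κ - t) :
    klSoftmax q x ≤ Fintype.card ι * exp (-t) := by
  set ε := Fintype.card ι * exp (-t)
  have hlin : ∑ z ∈ univ.filter (fun z => 0 < q z), q z * (x z - log (q z)) = κ := by
    rw [sum_congr rfl fun z hz => by rw [hsupp z (mem_filter.mp hz).2, add_sub_cancel_right],
      ← sum_mul, sum_filter_pos_eq_one hq hsum, one_mul]
  have hexp : ∀ v, exp (x v) ≤ exp κ * (q v + exp (-t)) := fun v => by
    by_cases hv : 0 < q v
    · rw [hsupp v hv, exp_add, exp_log hv]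
      nlinarith [exp_pos κ, exp_pos (-t)]
    · calc exp (x v) ≤ exp (κ + -t) := exp_le_exp.mpr (by linarith [hoff v hv])
        _ ≤ exp κ * (q v + exp (-t)) := by rw [exp_add]; nlinarith [exp_pos κ, hq v]
  have hT : ∑ v, exp (x v) ≤ exp κ * (1 + ε) := by
    calc ∑ v, exp (x v) ≤ ∑ v, exp κ * (q v + exp (-t)) := sum_le_sum fun v _ => hexp v
      _ = exp κ * (1 + ε) := by simp [ε, ← mul_sum, sum_add_distrib, hsum]
  have hε : 0 ≤ ε := by positivity
  have hlog : log (∑ v, exp (x v)) ≤ κ + ε :=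
    calc log (∑ v, exp (x v)) ≤ log (exp κ * (1 + ε)) :=
          log_le_log (sum_pos (fun v _ => exp_pos _)
            (nonempty_of_sum_ne_zero (by rw [hsum]; norm_num))) hT
      _ = κ + log (1 + ε) := by rw [log_mul (exp_pos _).ne' (by positivity), log_exp]
      _ ≤ κ + ε := by linarith [log_le_sub_one_of_pos (by positivity : 0 < 1 + ε)]
  rw [klSoftmax, hlin]
  linarith

theorem convexOn_klSoftmax (q : ι → ℝ) : ConvexOn ℝ Set.univ (klSoftmax q) := by
  refine ⟨convex_univ, fun x _ y _ a b ha hb hab => ?_⟩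
  have hlse := convexOn_logSumExp.2 (Set.mem_univ x) (Set.mem_univ y) ha hb hab
  have hlin : ∑ z ∈ univ.filter (fun z => 0 < q z), q z * ((a • x + b • y) z - log (q z)) =
      a * ∑ z ∈ univ.filter (fun z => 0 < q z), q z * (x z - log (q z)) +
        b * ∑ z ∈ univ.filter (fun z => 0 < q z), q z * (y z - log (q z)) := by
    simp only [mul_sum, ← sum_add_distrib, Pi.add_apply, Pi.smul_apply, smul_eq_mul]
    refine sum_congr rfl fun z _ => ?_
    linear_combination (q z * log (q z)) * hab
  simp only [klSoftmax, smul_eq_mul] at hlse ⊢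
  rw [hlin]
  linarith

end Softmax

theorem tendsto_sub_div_div_self (c : ℝ) {d : ℝ} (hd : 0 < d) :
    Tendsto (fun B => (B - c) / d / B) atTop (𝓝 d⁻¹) := by
  have h := ((tendsto_const_nhds (x := (1 : ℝ))).sub
    ((tendsto_const_nhds (x := c)).div_atTop tendsto_id)).div_const d
  rw [sub_zero, one_div] at h
  refine h.congr' ?_
  filter_upwards [eventually_gt_atTop 0] with B hB
  rw [id]
  field_simp

section CrossEntropy

open Finset Real Filter Topology

variable {V m : ℕ} {piv : Fin m → ℝ} {p : Fin m → Fin V → ℝ}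

theorem exists_pos_of_sum_eq_one {q : Fin V → ℝ} (hsum : ∑ z, q z = 1) : ∃ z, 0 < q z := by
  obtain ⟨z, -, hz⟩ := exists_lt_of_sum_lt (s := univ) (f := 0) (g := q) (by simp [hsum])
  exact ⟨z, hz⟩

theorem CEloss_sub_entropyH (hp : ∀ j z, 0 ≤ p j z) (hpsum : ∀ j, ∑ z, p j z = 1)
    (L : Matrix (Fin V) (Fin m) ℝ) :
    CEloss piv p L - entropyH piv p = ∑ j, piv j * klSoftmax (p j) fun z => L z j := by
  rw [CEloss, entropyH, neg_sub_neg, ← sum_sub_distrib]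
  refine sum_congr rfl fun j _ => ?_
  rw [← mul_sub, ← sum_sub_distrib, klSoftmax]
  congr 1
  have hT (z : Fin V) : 0 < ∑ v, exp (L v j) := sum_pos (fun v _ => exp_pos _) ⟨z, mem_univ z⟩
  have hterm : ∀ z ∈ univ.filter (fun z => 0 < p j z),
      p j z * log (p j z) - p j z * log (exp (L z j) / ∑ v, exp (L v j)) =
        p j z * log (∑ v, exp (L v j)) - p j z * (L z j - log (p j z)) := fun z _ => by
    rw [log_div (exp_pos _).ne' (hT z).ne', log_exp]; ring
  rw [sum_congr rfl hterm, sum_sub_distrib, ← sum_mul, sum_filter_pos_eq_one (hp j) (hpsum j),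
    one_mul]

theorem convexOn_CEloss (hpiv : ∀ j, 0 ≤ piv j) (hp : ∀ j z, 0 ≤ p j z)
    (hpsum : ∀ j, ∑ z, p j z = 1) : ConvexOn ℝ Set.univ (CEloss piv p) := by
  refine ⟨convex_univ, fun X _ Y _ a b ha hb hab => ?_⟩
  have hcol : ∀ j, piv j * klSoftmax (p j) (fun z => (a • X + b • Y) z j) ≤
      a * (piv j * klSoftmax (p j) fun z => X z j) +
        b * (piv j * klSoftmax (p j) fun z => Y z j) := fun j => by
    have h := (convexOn_klSoftmax (p j)).2 (Set.mem_univ fun z => X z j)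
      (Set.mem_univ fun z => Y z j) ha hb hab
    have hcomb : (fun z => (a • X + b • Y) z j) =
        (a • fun z => X z j) + b • fun z => Y z j := by
      ext z; simp
    rw [← hcomb, smul_eq_mul, smul_eq_mul] at h
    linarith [mul_le_mul_of_nonneg_left h (hpiv j)]
  have hH : entropyH piv p = a * entropyH piv p + b * entropyH piv p := by
    rw [← add_mul, hab, one_mul]
  have hsum := sum_le_sum fun j (_ : j ∈ univ) => hcol j
  rw [sum_add_distrib, ← mul_sum, ← mul_sum] at hsum
  have hCE (L : Matrix (Fin V) (Fin m) ℝ) :=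
    eq_add_of_sub_eq' (CEloss_sub_entropyH (piv := piv) hp hpsum L)
  rw [smul_eq_mul, smul_eq_mul, hCE, hCE X, hCE Y]
  linarith

theorem entropyH_lt_CEloss (hpiv : ∀ j, 0 < piv j) (hp : ∀ j z, 0 ≤ p j z)
    (hpsum : ∀ j, ∑ z, p j z = 1) {j₀ : Fin m} {v₀ : Fin V} (hv₀ : ¬ 0 < p j₀ v₀)
    (L : Matrix (Fin V) (Fin m) ℝ) : entropyH piv p < CEloss piv p L := by
  rw [← sub_pos, CEloss_sub_entropyH hp hpsum]
  exact sum_pos' (fun j _ => mul_nonneg (hpiv j).le (klSoftmax_nonneg (hp j) (hpsum j) _))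
    ⟨j₀, mem_univ _, mul_pos (hpiv j₀) (klSoftmax_pos (hp j₀) (hpsum j₀) hv₀ _)⟩

theorem CEloss_add_smul_le (hpiv : ∀ j, 0 ≤ piv j) (hpisum : ∑ j, piv j = 1)
    (hp : ∀ j z, 0 ≤ p j z) (hpsum : ∀ j, ∑ z, p j z = 1)
    {Lmm : Matrix (Fin V) (Fin m) ℝ} (hLmm : svmFeasibleP p Lmm)
    {Lin : Matrix (Fin V) (Fin m) ℝ}
    (hLin : ∀ j z z', 0 < p j z → 0 < p j z' → Lin z j - Lin z' j = log (p j z / p j z'))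
    {s : ℝ} (hs : ∀ z j, |Lin z j| ≤ s) {r : ℝ} (hr : 0 ≤ r) :
    CEloss piv p (Lin + r • Lmm) ≤ entropyH piv p + V * exp (2 * s) * exp (-r) := by
  set ε := (V : ℝ) * exp (2 * s) * exp (-r) with hε_def
  have hcol : ∀ j, klSoftmax (p j) (fun z => (Lin + r • Lmm) z j) ≤ ε := fun j => by
    obtain ⟨z₀, hz₀⟩ := exists_pos_of_sum_eq_one (hpsum j)
    have hlogz₀ : log (p j z₀) ≤ 0 :=
      log_nonpos (hp j z₀)
        ((single_le_sum (fun z _ => hp j z) (mem_univ z₀)).trans (hpsum j).le)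
    have hε : ε = Fintype.card (Fin V) * exp (-(r - 2 * s)) := by
      rw [Fintype.card_fin, hε_def, mul_assoc, ← exp_add]; ring_nf
    rw [hε]
    refine klSoftmax_le (hp j) (hpsum j) (κ := Lin z₀ j + r * Lmm z₀ j - log (p j z₀))
      (fun z hz => ?_) (fun v hv => ?_)
    · have := hLin j z z₀ hz hz₀
      rw [log_div hz.ne' hz₀.ne'] at this
      simp only [Matrix.add_apply, Matrix.smul_apply, smul_eq_mul, hLmm.1 j z z₀ hz hz₀]
      linarith
    · have := hLmm.2 j z₀ v hz₀ hv
      simp only [Matrix.add_apply, Matrix.smul_apply, smul_eq_mul]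
      nlinarith [abs_le.mp (hs v j), abs_le.mp (hs z₀ j)]
  rw [← sub_le_iff_le_add', CEloss_sub_entropyH hp hpsum]
  calc ∑ j, piv j * klSoftmax (p j) (fun z => (Lin + r • Lmm) z j) ≤ ∑ j, piv j * ε :=
        sum_le_sum fun j _ => mul_le_mul_of_nonneg_left (hcol j) (hpiv j)
    _ = ε := by rw [← sum_mul, hpisum, one_mul]

theorem exists_CEloss_lt (hpiv : ∀ j, 0 < piv j) (hpisum : ∑ j, piv j = 1)
    (hp : ∀ j z, 0 ≤ p j z) (hpsum : ∀ j, ∑ z, p j z = 1) {j₀ : Fin m} {v₀ : Fin V}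
    (hv₀ : ¬ 0 < p j₀ v₀) {Lmm : Matrix (Fin V) (Fin m) ℝ} (hLmm : svmFeasibleP p Lmm)
    {Lin : Matrix (Fin V) (Fin m) ℝ}
    (hLin : ∀ j z z', 0 < p j z → 0 < p j z' → Lin z j - Lin z' j = log (p j z / p j z'))
    (L : Matrix (Fin V) (Fin m) ℝ) : ∃ L', CEloss piv p L' < CEloss piv p L := by
  have hbound : Tendsto (fun r => entropyH piv p + V * exp (2 * specNorm Lin) * exp (-r))
      atTop (𝓝 (entropyH piv p)) := by
    simpa using tendsto_const_nhds.add (tendsto_exp_neg_atTop_nhds_zero.const_mul _)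
  obtain ⟨r, hr, hr0⟩ := ((hbound.eventually
    (gt_mem_nhds (entropyH_lt_CEloss hpiv hp hpsum hv₀ L))).and (eventually_ge_atTop 0)).exists
  exact ⟨_, (CEloss_add_smul_le (fun j => (hpiv j).le) hpisum hp hpsum hLmm hLin
    (abs_apply_le_specNorm Lin) hr0).trans_lt hr⟩

theorem nuclearNorm_pos_of_svmFeasibleP (hpsum : ∀ j, ∑ z, p j z = 1)
    {L : Matrix (Fin V) (Fin m) ℝ} (hL : svmFeasibleP p L) {j : Fin m} {v : Fin V}
    (hv : ¬ 0 < p j v) : 0 < nuclearNorm L := by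
  obtain ⟨z, hz⟩ := exists_pos_of_sum_eq_one (hpsum j)
  have := hL.2 j z v hz hv
  linarith [abs_le.mp (abs_apply_le_nuclearNorm L z j),
    abs_le.mp (abs_apply_le_nuclearNorm L v j)]

end CrossEntropy

theorem stmt_16_general (V m : ℕ)
    (piv : Fin m → ℝ) (hpiv : ∀ j, 0 < piv j) (hpisum : ∑ j, piv j = 1)
    (p : Fin m → Fin V → ℝ) (hp : ∀ j z, 0 ≤ p j z) (hpsum : ∀ j, ∑ z, p j z = 1)
    (hsparse : ∃ j, ∃ v, ¬ 0 < p j v)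
    (Lhat : ℝ → Matrix (Fin V) (Fin m) ℝ)
    (hmin : ∀ B : ℝ, 0 < B → nuclearNorm (Lhat B) ≤ B ∧
        ∀ L : Matrix (Fin V) (Fin m) ℝ, nuclearNorm L ≤ B →
          CEloss piv p (Lhat B) ≤ CEloss piv p L)
    (Lmm : Matrix (Fin V) (Fin m) ℝ)
    (hLmmF : svmFeasibleP p Lmm)
    (Lin : Matrix (Fin V) (Fin m) ℝ)
    (hLin : ∀ j z z', 0 < p j z → 0 < p j z' →
        Lin z j - Lin z' j = Real.log (p j z / p j z'))
    (R : ℝ → ℝ)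
    (hR : ∀ B, R B = (nuclearNorm (Lhat B) - nuclearNorm Lin) / nuclearNorm Lmm) :
    (∀ B : ℝ, nuclearNorm Lin < B →
        nuclearNorm (Lin + R B • Lmm) ≤ B ∧
        CEloss piv p (Lin + R B • Lmm) ≤
          entropyH piv p + (V : ℝ) * Real.exp (2 * specNorm Lin) * Real.exp (-(R B))) ∧
    Tendsto R atTop atTop ∧
    Tendsto (fun B => R B / nuclearNorm (Lhat B)) atTop (𝓝 (nuclearNorm Lmm)⁻¹) ∧
    Tendsto (fun B => CEloss piv p (Lhat B)) atTop (𝓝 (entropyH piv p)) := by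
  obtain ⟨j₀, v₀, hv₀⟩ := hsparse
  set c := nuclearNorm Lin
  set d := nuclearNorm Lmm
  have hd : 0 < d := nuclearNorm_pos_of_svmFeasibleP hpsum hLmmF hv₀
  have hsat : ∀ B, 0 < B → nuclearNorm (Lhat B) = B := fun B hB => by
    obtain ⟨L, hL⟩ := exists_CEloss_lt hpiv hpisum hp hpsum hv₀ hLmmF hLin (Lhat B)
    exact (convexOn_CEloss (fun j => (hpiv j).le) hp hpsum).eq_of_isMinOn_of_lt
      convexOn_nuclearNorm (hmin B hB).1 (fun L' hL' => (hmin B hB).2 L' hL') hL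
  have hRB : ∀ᶠ B in atTop, R B = (B - c) / d :=
    (eventually_gt_atTop 0).mono fun B hB => by rw [hR, hsat B hB]
  have hRtop : Tendsto R atTop atTop :=
    ((tendsto_atTop_add_const_right _ (-c) tendsto_id).atTop_div_const hd).congr'
      (hRB.mono fun B h => h.symm)
  have hpathR : ∀ B, c < B → nuclearNorm (Lin + R B • Lmm) ≤ B ∧
      CEloss piv p (Lin + R B • Lmm) ≤
        entropyH piv p + V * Real.exp (2 * specNorm Lin) * Real.exp (-(R B)) := fun B hB => by
    have hRB : R B = (B - c) / d := by rw [hR, hsat B ((nuclearNorm_nonneg Lin).trans_lt hB)]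
    have hR0 : 0 ≤ R B := by rw [hRB]; exact div_nonneg (by linarith) hd.le
    refine ⟨(nuclearNorm_add_smul_le Lin Lmm hR0).trans_eq ?_, CEloss_add_smul_le
      (fun j => (hpiv j).le) hpisum hp hpsum hLmmF hLin (abs_apply_le_specNorm Lin) hR0⟩
    rw [hRB]; field_simp; ring
  refine ⟨hpathR, hRtop, ?_, ?_⟩
  · refine (tendsto_sub_div_div_self c hd).congr' ?_
    filter_upwards [hRB, eventually_gt_atTop 0] with B hRB hB
    rw [hRB, hsat B hB]
  · have hbound : Tendsto (fun B => entropyH piv p +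
        V * Real.exp (2 * specNorm Lin) * Real.exp (-(R B))) atTop (𝓝 (entropyH piv p)) := by
      simpa using tendsto_const_nhds.add
        ((Real.tendsto_exp_neg_atTop_nhds_zero.comp hRtop).const_mul _)
    refine tendsto_of_tendsto_of_tendsto_of_le_of_le' tendsto_const_nhds hbound
      (Eventually.of_forall fun B => (entropyH_lt_CEloss hpiv hp hpsum hv₀ _).le) ?_
    filter_upwards [eventually_gt_atTop c] with B hB
    exact ((hmin B ((nuclearNorm_nonneg Lin).trans_lt hB)).2 _ (hpathR B hB).1).trans
      (hpathR B hB).2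

/-- with `L̂_B` minimizers of `CE` over nuclear-norm balls, `L^mm` an NTP-SVM
minimizer, `L^in` the log-odds element of `F`, and `R(B) = (‖L̂_B‖_* − ‖L^in‖_*)/‖L^mm‖_*`:
(a) `L_R = L^in + R L^mm` is feasible with `CE(L_R) ≤ H + V e^{2‖L^in‖₂} e^{−R}`;
(b) `R(B) → ∞` and `R(B)/‖L̂_B‖_* → 1/‖L^mm‖_*`; (c) `CE(L̂_B) → H`. -/
theorem stmt_16 (V m : ℕ) (hV : 2 ≤ V) (hm : 0 < m)
    (piv : Fin m → ℝ) (hpiv : ∀ j, 0 < piv j) (hpisum : ∑ j, piv j = 1)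
    (p : Fin m → Fin V → ℝ) (hp : ∀ j z, 0 ≤ p j z) (hpsum : ∀ j, ∑ z, p j z = 1)
    (hsparse : ∃ j, ∃ v, ¬ 0 < p j v)
    (Lhat : ℝ → Matrix (Fin V) (Fin m) ℝ)
    (hmin : ∀ B : ℝ, 0 < B → nuclearNorm (Lhat B) ≤ B ∧
        ∀ L : Matrix (Fin V) (Fin m) ℝ, nuclearNorm L ≤ B →
          CEloss piv p (Lhat B) ≤ CEloss piv p L)
    (Lmm : Matrix (Fin V) (Fin m) ℝ)
    (hLmmF : svmFeasibleP p Lmm)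
    (hLmmMin : ∀ L : Matrix (Fin V) (Fin m) ℝ, svmFeasibleP p L →
        nuclearNorm Lmm ≤ nuclearNorm L)
    (Lin : Matrix (Fin V) (Fin m) ℝ)
    (hLinF : Lin ∈ Fsub p)
    (hLin : ∀ j z z', 0 < p j z → 0 < p j z' →
        Lin z j - Lin z' j = Real.log (p j z / p j z'))
    (R : ℝ → ℝ)
    (hR : ∀ B, R B = (nuclearNorm (Lhat B) - nuclearNorm Lin) / nuclearNorm Lmm) :
    (∀ B : ℝ, nuclearNorm Lin < B →
        nuclearNorm (Lin + R B • Lmm) ≤ B ∧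
        CEloss piv p (Lin + R B • Lmm) ≤
          entropyH piv p + (V : ℝ) * Real.exp (2 * specNorm Lin) * Real.exp (-(R B))) ∧
    Tendsto R atTop atTop ∧
    Tendsto (fun B => R B / nuclearNorm (Lhat B)) atTop (𝓝 (nuclearNorm Lmm)⁻¹) ∧
    Tendsto (fun B => CEloss piv p (Lhat B)) atTop (𝓝 (entropyH piv p)) :=
  stmt_16_general V m piv hpiv hpisum p hp hpsum hsparse Lhat hmin Lmm hLmmF Lin hLin R hR
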